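/- If v ∈ Γ(0), then v(x) = 0 for Lebesgue-almost every x ∈ Ω \ M at which f(x) > 0; equivalently, v vanishes almost everywhere with respect to the measure f·𝓛^d restricted to Ω \ M. Consequently, in any dimension d, the tangent space to μ is ℝ^d a.e. on Ω \ M for the absolutely continuous part of μ. -/

import Mathlib

open MeasureTheory Filter Set
open scoped ENNReal

/-- The gradient of a smooth function on `EuclideanSpace ℝ (Fin d)`. -/
noncomputable def euclGrad {d : ℕ} (u : EuclideanSpace ℝ (Fin d) → ℝ)
    (x : EuclideanSpace ℝ (Fin d)) : EuclideanSpace ℝ (Fin d) :=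
  WithLp.toLp 2 (fun i => fderiv ℝ u x (EuclideanSpace.single i 1))

/-- `v ∈ Γ(0)`. -/
def InGammaZero {d : ℕ} (μ : Measure (EuclideanSpace ℝ (Fin d)))
    (v : EuclideanSpace ℝ (Fin d) → EuclideanSpace ℝ (Fin d)) : Prop :=
  ∃ U : ℕ → EuclideanSpace ℝ (Fin d) → ℝ, (∀ n, ContDiff ℝ (⊤ : ℕ∞) (U n)) ∧
    Tendsto (fun n => eLpNorm (U n) 2 μ) atTop (nhds 0) ∧
    Tendsto (fun n => eLpNorm (fun x => euclGrad (U n) x - v x) 2 μ) atTop (nhds 0)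

lemma aux_abs_apply_le_norm {d : ℕ} (x : EuclideanSpace ℝ (Fin d)) (i : Fin d) :
    |x i| ≤ ‖x‖ := by
  rw [EuclideanSpace.norm_eq]
  rw [show |x i| = Real.sqrt (‖x i‖ ^ 2) by
    rw [Real.sqrt_sq_eq_abs, Real.norm_eq_abs, abs_abs]]
  exact Real.sqrt_le_sqrt (Finset.single_le_sum (fun j _ => sq_nonneg (‖x j‖))
    (Finset.mem_univ i))

lemma aux_holder {α : Type*} [MeasurableSpace α] {m : Measure α} {G F : α → ℝ≥0∞}
    (hG : AEMeasurable G m) (hF : Measurable F) (hFpos : ∀ᵐ x ∂m, F x ≠ 0)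
    (hFfin : ∀ x, F x ≠ ⊤) :
    ∫⁻ x, G x ∂m ≤ (∫⁻ x, G x ^ (2:ℝ) * F x ∂m) ^ (1/2:ℝ) *
      (∫⁻ x, (F x)⁻¹ ∂m) ^ (1/2:ℝ) := by
  have h1 : ∫⁻ x, G x ∂m
      = ∫⁻ x, ((fun x => G x * F x ^ (1/2:ℝ)) * (fun x => ((F x)⁻¹) ^ (1/2:ℝ))) x ∂m := by
    apply lintegral_congr_ae
    filter_upwards [hFpos] with x hx
    simp only [Pi.mul_apply]
    rw [ENNReal.inv_rpow, mul_assoc, ENNReal.mul_inv_cancel, mul_one]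
    · simp [ENNReal.rpow_eq_zero_iff, hx]
    · exact ENNReal.rpow_ne_top_of_nonneg (by norm_num) (hFfin x)
  rw [h1]
  have hconj : Real.HolderConjugate 2 2 := Real.HolderConjugate.two_two
  refine le_trans (ENNReal.lintegral_mul_le_Lp_mul_Lq m hconj
    (hG.mul ((ENNReal.continuous_rpow_const.measurable.comp hF).aemeasurable))
    ((ENNReal.continuous_rpow_const.measurable.comp hF.inv).aemeasurable)) ?_
  apply le_of_eq
  congr 1
  · congr 1
    apply lintegral_congr fun x => ?_
    rw [ENNReal.mul_rpow_of_nonneg _ _ (by norm_num : (0:ℝ) ≤ 2), ← ENNReal.rpow_mul]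
    norm_num
  · congr 1
    apply lintegral_congr fun x => ?_
    rw [← ENNReal.rpow_mul]
    norm_num

lemma aux_eLpNorm_two {α G : Type*} [MeasurableSpace α] [NormedAddCommGroup G]
    (m : Measure α) (g : α → G) :
    (∫⁻ x, (‖g x‖₊ : ℝ≥0∞) ^ (2:ℝ) ∂m) ^ (1/2:ℝ) = eLpNorm g 2 m := by
  rw [eLpNorm_eq_lintegral_rpow_enorm_toReal (by norm_num) (by norm_num)]
  norm_num
  rfl

lemma key_ball {d : ℕ} {μ : Measure (EuclideanSpace ℝ (Fin d))}
    {f : EuclideanSpace ℝ (Fin d) → ℝ} (hfmeas : Measurable f)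
    (hle : volume.withDensity (fun x => ENNReal.ofReal (f x)) ≤ μ)
    {v : EuclideanSpace ℝ (Fin d) → EuclideanSpace ℝ (Fin d)}
    (hvL2 : MemLp v 2 μ) (hv : InGammaZero μ v)
    (c : EuclideanSpace ℝ (Fin d)) (R : ℝ)
    (hfin : ∫⁻ t in Metric.ball c R, (ENNReal.ofReal (f t))⁻¹ ∂volume ≠ ⊤) :
    ∀ᵐ y ∂volume, y ∈ Metric.ball c R → v y = 0 := by
  set F : EuclideanSpace ℝ (Fin d) → ℝ≥0∞ := fun x => ENNReal.ofReal (f x) with hFdef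
  set ν : Measure (EuclideanSpace ℝ (Fin d)) := volume.withDensity F with hνdef
  set B := Metric.ball c R with hBdef
  have hBmeas : MeasurableSet B := measurableSet_ball
  have hFmeas : Measurable F := hfmeas.ennreal_ofReal
  have hFfin : ∀ x, F x ≠ ⊤ := fun x => ENNReal.ofReal_ne_top
  have hFpos : ∀ᵐ x ∂(volume.restrict B), F x ≠ 0 := by
    filter_upwards [ae_lt_top hFmeas.inv hfin] with x hx h0
    rw [Pi.inv_apply, h0, ENNReal.inv_zero] at hx
    exact (lt_irrefl _ hx)
  set C : ℝ≥0∞ := (∫⁻ t in B, (F t)⁻¹ ∂volume) ^ (1/2:ℝ) with hCdef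
  have hC : C ≠ ⊤ := ENNReal.rpow_ne_top_of_nonneg (by norm_num) hfin
  have boundA : ∀ G : EuclideanSpace ℝ (Fin d) → ℝ≥0∞, AEMeasurable G (volume.restrict B) →
      ∫⁻ x in B, G x ∂volume ≤ (∫⁻ x, G x ^ (2:ℝ) ∂ν) ^ (1/2:ℝ) * C := by
    intro G hG
    refine le_trans (aux_holder hG hFmeas hFpos hFfin) ?_
    have h2 : ∫⁻ x in B, G x ^ (2:ℝ) * F x ∂volume ≤ ∫⁻ x, G x ^ (2:ℝ) ∂ν :=
      calc ∫⁻ x in B, G x ^ (2:ℝ) * F x ∂volume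
          = ∫⁻ x in B, (F * fun x => G x ^ (2:ℝ)) x ∂volume :=
            lintegral_congr fun x => mul_comm _ _
        _ = ∫⁻ x in B, G x ^ (2:ℝ) ∂ν :=
            (setLIntegral_withDensity_eq_setLIntegral_mul_non_measurable volume hFmeas _
              hBmeas (ae_of_all _ fun x => (hFfin x).lt_top)).symm
        _ ≤ ∫⁻ x, G x ^ (2:ℝ) ∂ν := lintegral_mono' Measure.restrict_le_self le_rfl
    exact mul_le_mul_left (ENNReal.rpow_le_rpow h2 (by norm_num)) C
  -- absolute continuity and measurability of v
  have hac : volume.restrict B ≪ μ := by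
    have h1 : volume.restrict B ≪ ν.restrict B := by
      refine Measure.AbsolutelyContinuous.mk fun S hS hS0 => ?_
      rw [Measure.restrict_apply hS] at hS0 ⊢
      rw [hνdef, withDensity_apply _ (hS.inter hBmeas)] at hS0
      have hz : ∀ᵐ x ∂(volume.restrict (S ∩ B)), F x = 0 :=
        (lintegral_eq_zero_iff hFmeas).mp hS0
      have hp : ∀ᵐ x ∂(volume.restrict (S ∩ B)), F x ≠ 0 :=
        ae_mono (Measure.restrict_mono inter_subset_right le_rfl) hFpos
      have hfalse : ∀ᵐ x ∂(volume.restrict (S ∩ B)), False := by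
        filter_upwards [hz, hp] with x h1 h2; exact h2 h1
      have h0 : volume.restrict (S ∩ B) univ = 0 := by
        simpa using ae_iff.mp hfalse
      rwa [Measure.restrict_apply MeasurableSet.univ, univ_inter] at h0
    exact h1.trans ((Measure.restrict_le_self.trans hle).absolutelyContinuous)
  have hvmB : AEStronglyMeasurable v (volume.restrict B) :=
    hvL2.aestronglyMeasurable.mono_ac hac
  obtain ⟨U, hUsm, hU0, hUg⟩ := hv
  have hgradc : ∀ n, Continuous (euclGrad (U n)) := by
    intro n
    have h1 : Continuous (fderiv ℝ (U n)) := (hUsm n).continuous_fderiv (by simp)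
    exact (PiLp.continuous_toLp 2 _).comp (continuous_pi fun i => h1.clm_apply continuous_const)
  have hcv0 : Tendsto (fun n => eLpNorm (U n) 2 ν) atTop (nhds 0) :=
    tendsto_of_tendsto_of_tendsto_of_le_of_le tendsto_const_nhds hU0
      (fun n => zero_le) (fun n => eLpNorm_mono_measure _ hle)
  have hcvg : Tendsto (fun n => eLpNorm (fun x => euclGrad (U n) x - v x) 2 ν) atTop (nhds 0) :=
    tendsto_of_tendsto_of_tendsto_of_le_of_le tendsto_const_nhds hUg
      (fun n => zero_le) (fun n => eLpNorm_mono_measure _ hle)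
  -- L¹ convergences on B
  have l1u : Tendsto (fun n => ∫⁻ x in B, ‖U n x‖₊ ∂volume) atTop (nhds 0) := by
    have hb : ∀ n, ∫⁻ x in B, (‖U n x‖₊ : ℝ≥0∞) ∂volume ≤ eLpNorm (U n) 2 ν * C := fun n =>
      calc ∫⁻ x in B, (‖U n x‖₊ : ℝ≥0∞) ∂volume
          ≤ (∫⁻ x, (‖U n x‖₊ : ℝ≥0∞) ^ (2:ℝ) ∂ν) ^ (1/2:ℝ) * C :=
            boundA _ ((hUsm n).continuous.aestronglyMeasurable.enorm)
        _ = eLpNorm (U n) 2 ν * C := by rw [aux_eLpNorm_two]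
    have h0 : Tendsto (fun n => eLpNorm (U n) 2 ν * C) atTop (nhds 0) := by
      simpa using ENNReal.Tendsto.mul_const hcv0 (Or.inr hC)
    exact tendsto_of_tendsto_of_tendsto_of_le_of_le tendsto_const_nhds h0
      (fun n => zero_le) hb
  have l1g : Tendsto (fun n => ∫⁻ x in B, ‖euclGrad (U n) x - v x‖₊ ∂volume) atTop (nhds 0) := by
    have hb : ∀ n, ∫⁻ x in B, (‖euclGrad (U n) x - v x‖₊ : ℝ≥0∞) ∂volume
        ≤ eLpNorm (fun x => euclGrad (U n) x - v x) 2 ν * C := fun n =>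
      calc ∫⁻ x in B, (‖euclGrad (U n) x - v x‖₊ : ℝ≥0∞) ∂volume
          ≤ (∫⁻ x, (‖euclGrad (U n) x - v x‖₊ : ℝ≥0∞) ^ (2:ℝ) ∂ν) ^ (1/2:ℝ) * C :=
            boundA _ (((hgradc n).aestronglyMeasurable.sub hvmB).enorm)
        _ = _ := by rw [aux_eLpNorm_two]
    have h0 : Tendsto (fun n => eLpNorm (fun x => euclGrad (U n) x - v x) 2 ν * C)
        atTop (nhds 0) := by
      simpa using ENNReal.Tendsto.mul_const hcvg (Or.inr hC)
    exact tendsto_of_tendsto_of_tendsto_of_le_of_le tendsto_const_nhds h0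
      (fun n => zero_le) hb
  have hvfin : ∫⁻ x in B, (‖v x‖₊ : ℝ≥0∞) ∂volume ≠ ⊤ := by
    have h1 : eLpNorm v 2 ν ≠ ⊤ :=
      ne_top_of_le_ne_top hvL2.eLpNorm_ne_top (eLpNorm_mono_measure _ hle)
    refine ne_top_of_le_ne_top (ENNReal.mul_ne_top h1 hC) ?_
    calc ∫⁻ x in B, (‖v x‖₊ : ℝ≥0∞) ∂volume
        ≤ (∫⁻ x, (‖v x‖₊ : ℝ≥0∞) ^ (2:ℝ) ∂ν) ^ (1/2:ℝ) * C := boundA _ hvmB.enorm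
      _ = eLpNorm v 2 ν * C := by rw [aux_eLpNorm_two]
  -- coordinatewise L¹ convergence
  have l1gi : ∀ i : Fin d,
      Tendsto (fun n => ∫⁻ x in B, (‖euclGrad (U n) x i - v x i‖₊ : ℝ≥0∞) ∂volume)
        atTop (nhds 0) := by
    intro i
    refine tendsto_of_tendsto_of_tendsto_of_le_of_le tendsto_const_nhds l1g
      (fun n => zero_le) (fun n => lintegral_mono fun x => ?_)
    have he : euclGrad (U n) x i - v x i = (euclGrad (U n) x - v x) i := rfl
    rw [he]
    have hle' : ‖(euclGrad (U n) x - v x) i‖ ≤ ‖euclGrad (U n) x - v x‖ := by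
      simpa [Real.norm_eq_abs] using aux_abs_apply_le_norm (euclGrad (U n) x - v x) i
    exact ENNReal.coe_le_coe.mpr hle'
  -- main tendsto tool
  have hmain : ∀ (ψ : EuclideanSpace ℝ (Fin d) → ℝ) (Cψ : ℝ≥0∞), Cψ ≠ ⊤ →
      (∀ x, (‖ψ x‖₊ : ℝ≥0∞) ≤ Cψ) →
      ∀ w : ℕ → EuclideanSpace ℝ (Fin d) → ℝ,
      Tendsto (fun n => ∫⁻ x in B, (‖w n x‖₊ : ℝ≥0∞) ∂volume) atTop (nhds 0) →
      Tendsto (fun n => ∫ x in B, ψ x * w n x ∂volume) atTop (nhds 0) := by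
    intro ψ Cψ hCψ hbd w hw
    have h2 : Tendsto (fun n => ∫⁻ x in B, (‖ψ x * w n x‖₊ : ℝ≥0∞) ∂volume) atTop (nhds 0) := by
      have hb : ∀ n, ∫⁻ x in B, (‖ψ x * w n x‖₊ : ℝ≥0∞) ∂volume
          ≤ Cψ * ∫⁻ x in B, (‖w n x‖₊ : ℝ≥0∞) ∂volume := by
        intro n
        rw [← lintegral_const_mul' _ _ hCψ]
        refine lintegral_mono fun x => ?_
        rw [nnnorm_mul]
        push_cast
        exact mul_le_mul_left (hbd x) _
      have h0 : Tendsto (fun n => Cψ * ∫⁻ x in B, (‖w n x‖₊ : ℝ≥0∞) ∂volume) atTop (nhds 0) := by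
        simpa using ENNReal.Tendsto.const_mul hw (Or.inr hCψ)
      exact tendsto_of_tendsto_of_tendsto_of_le_of_le tendsto_const_nhds h0
        (fun n => zero_le) hb
    rw [tendsto_zero_iff_norm_tendsto_zero]
    have htr : Tendsto (fun n => (∫⁻ x in B, (‖ψ x * w n x‖₊ : ℝ≥0∞) ∂volume).toReal)
        atTop (nhds 0) := by
      simpa [Function.comp_def] using (ENNReal.tendsto_toReal (by simp)).comp h2
    refine squeeze_zero (fun n => norm_nonneg _) (fun n => ?_) htr
    refine le_trans (norm_integral_le_lintegral_norm _) (le_of_eq ?_)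
    congr 1
    exact lintegral_congr fun x => ofReal_norm_eq_enorm _
  -- integrability of coordinates of v on B
  have hIv : ∀ i : Fin d, Integrable (fun x => v x i) (volume.restrict B) := by
    intro i
    constructor
    · exact (EuclideanSpace.proj (𝕜 := ℝ) i).continuous.comp_aestronglyMeasurable hvmB
    · refine lt_of_le_of_lt (lintegral_mono fun x => ?_) hvfin.lt_top
      have hle' : ‖v x i‖ ≤ ‖v x‖ := by
        simpa [Real.norm_eq_abs] using aux_abs_apply_le_norm (v x) i
      exact ENNReal.coe_le_coe.mpr hle'
  -- per-coordinate vanishing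
  have hcoord : ∀ i : Fin d, ∀ᵐ y ∂(volume : Measure (EuclideanSpace ℝ (Fin d))),
      y ∈ B → v y i = 0 := by
    intro i
    apply (Metric.isOpen_ball (x := c) (ε := R)).ae_eq_zero_of_integral_contDiff_smul_eq_zero
    · exact IntegrableOn.locallyIntegrableOn (hIv i)
    · intro g hgsm hgsupp hgsub
      simp only [smul_eq_mul]
      have hgB : ∀ x, x ∉ B → g x = 0 := fun x hx =>
        image_eq_zero_of_notMem_tsupport fun h => hx (hgsub h)
      rw [← setIntegral_eq_integral_of_forall_compl_eq_zero
        (fun x hx => by rw [hgB x hx, zero_mul])]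
      -- bounds for g and its directional derivative
      obtain ⟨Cg, hCg⟩ := hgsupp.exists_bound_of_continuous hgsm.continuous
      set dg : EuclideanSpace ℝ (Fin d) → ℝ :=
        fun x => fderiv ℝ g x (EuclideanSpace.single i 1) with hdgdef
      have hdgc : Continuous dg :=
        (hgsm.continuous_fderiv (by simp)).clm_apply continuous_const
      have hdgsupp : HasCompactSupport dg := hgsupp.fderiv_apply ℝ _
      obtain ⟨Cdg, hCdg⟩ := hdgsupp.exists_bound_of_continuous hdgc
      have hdgB : ∀ x, x ∉ B → dg x = 0 := by
        intro x hx
        have hxt : x ∉ tsupport g := fun h => hx (hgsub h)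
        have h0 : fderiv ℝ g x = 0 :=
          Function.notMem_support.mp fun h => hxt (support_fderiv_subset ℝ h)
        simp [hdgdef, h0]
      have hUdiff : ∀ n, Differentiable ℝ (U n) := fun n => (hUsm n).differentiable (by simp)
      have hgdiff : Differentiable ℝ g := hgsm.differentiable (by simp)
      have hUc : ∀ n, Continuous (U n) := fun n => (hUsm n).continuous
      have hIgrad : ∀ n, Integrable (fun x => g x * euclGrad (U n) x i) volume := by
        intro n
        have hc : Continuous (fun x => euclGrad (U n) x i) :=
          ((hUsm n).continuous_fderiv (by simp)).clm_apply continuous_const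
        exact (hgsm.continuous.mul hc).integrable_of_hasCompactSupport hgsupp.mul_right
      have hibp : ∀ n, ∫ x in B, g x * euclGrad (U n) x i ∂volume
          = - ∫ x in B, dg x * U n x ∂volume := by
        intro n
        rw [setIntegral_eq_integral_of_forall_compl_eq_zero
            (fun x hx => by rw [hgB x hx, zero_mul]),
          setIntegral_eq_integral_of_forall_compl_eq_zero
            (fun x hx => by rw [hdgB x hx, zero_mul])]
        have hI1 : Integrable (fun x => dg x * U n x) volume :=
          (hdgc.mul (hUc n)).integrable_of_hasCompactSupport hdgsupp.mul_right
        have hI3 : Integrable (fun x => g x * U n x) volume :=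
          (hgsm.continuous.mul (hUc n)).integrable_of_hasCompactSupport hgsupp.mul_right
        exact integral_mul_fderiv_eq_neg_fderiv_mul_of_integrable hI1 (hIgrad n) hI3
          (fun x _ => hgdiff x) (fun x _ => hUdiff n x)
      have t3 : Tendsto (fun n => ∫ x in B, g x * euclGrad (U n) x i ∂volume)
          atTop (nhds 0) := by
        have hdgbd : ∀ x, (‖dg x‖₊ : ℝ≥0∞) ≤ ENNReal.ofReal Cdg := by
          intro x
          rw [← enorm_eq_nnnorm, ← ofReal_norm_eq_enorm]
          exact ENNReal.ofReal_le_ofReal (hCdg x)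
        have h := (hmain dg (ENNReal.ofReal Cdg) ENNReal.ofReal_ne_top hdgbd U l1u).neg
        rw [neg_zero] at h
        exact h.congr fun n => (hibp n).symm
      have hIgv : Integrable (fun x => g x * v x i) (volume.restrict B) :=
        (hIv i).bdd_mul hgsm.continuous.aestronglyMeasurable (ae_of_all _ hCg)
      have t2 : Tendsto (fun n => ∫ x in B, g x * euclGrad (U n) x i ∂volume)
          atTop (nhds (∫ x in B, g x * v x i ∂volume)) := by
        have hgbd : ∀ x, (‖g x‖₊ : ℝ≥0∞) ≤ ENNReal.ofReal Cg := by
          intro x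
          rw [← enorm_eq_nnnorm, ← ofReal_norm_eq_enorm]
          exact ENNReal.ofReal_le_ofReal (hCg x)
        have hdiffto := hmain g (ENNReal.ofReal Cg) ENNReal.ofReal_ne_top hgbd
          (fun n x => euclGrad (U n) x i - v x i) (l1gi i)
        have heq2 : ∀ n, ∫ x in B, g x * euclGrad (U n) x i ∂volume
            = ∫ x in B, g x * v x i ∂volume
              + ∫ x in B, g x * (euclGrad (U n) x i - v x i) ∂volume := by
          intro n
          have hIsub : Integrable (fun x => g x * (euclGrad (U n) x i - v x i))
              (volume.restrict B) := by
            simpa [mul_sub, Pi.sub_def] using ((hIgrad n).restrict (s := B)).sub hIgv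
          rw [← integral_add hIgv hIsub]
          exact integral_congr_ae (ae_of_all _ fun x => by ring)
        have h := (tendsto_const_nhds
          (x := ∫ x in B, g x * v x i ∂volume) (f := atTop (α := ℕ))).add hdiffto
        rw [add_zero] at h
        exact h.congr fun n => (heq2 n).symm
      exact tendsto_nhds_unique t2 t3
  have hall := ae_all_iff.mpr hcoord
  filter_upwards [hall] with y hy hyB
  refine PiLp.ext fun i => ?_
  simpa using hy i hyB


/-- In any dimension `d`, any `μ`-gradient of `0` vanishes `f·𝓛ᵈ`-a.e. on `Ω \ M`:
the tangent space to `μ` is `ℝᵈ` a.e. on `Ω \ M` for the absolutely continuous part. -/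
theorem gradient_of_zero_vanishes_outside_critical_set_dim_d
    (d : ℕ) (Ω : Set (EuclideanSpace ℝ (Fin d)))
    (hΩopen : IsOpen Ω) (hΩbdd : Bornology.IsBounded Ω)
    (μ : Measure (EuclideanSpace ℝ (Fin d))) [IsFiniteMeasure μ] (hμΩ : μ Ωᶜ = 0)
    (f : EuclideanSpace ℝ (Fin d) → ℝ) (hfmeas : Measurable f) (hfnonneg : 0 ≤ f)
    (μs : Measure (EuclideanSpace ℝ (Fin d))) (hsing : μs ⟂ₘ volume)
    (hdecomp : μ = volume.withDensity (fun x => ENNReal.ofReal (f x)) + μs)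
    (M : Set (EuclideanSpace ℝ (Fin d)))
    (hM : M = {x ∈ closure Ω | ∀ ε > 0,
      ∫⁻ t in Ω ∩ Metric.ball x ε, (ENNReal.ofReal (f t))⁻¹ = ⊤})
    (v : EuclideanSpace ℝ (Fin d) → EuclideanSpace ℝ (Fin d))
    (hvL2 : MemLp v 2 μ) (hv : InGammaZero μ v) :
    ∀ᵐ x ∂(volume.restrict (Ω \ M)), 0 < f x → v x = 0 := by

  have hle : volume.withDensity (fun x => ENNReal.ofReal (f x)) ≤ μ := by
    rw [hdecomp]; exact Measure.le_add_right le_rfl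
  set W : Set (EuclideanSpace ℝ (Fin d)) :=
    {x | ∃ ε > 0, Metric.ball x ε ⊆ Ω ∧
      ∫⁻ t in Metric.ball x ε, (ENNReal.ofReal (f t))⁻¹ ∂volume ≠ ⊤} with hWdef
  have hWopen : IsOpen W := by
    rw [Metric.isOpen_iff]
    rintro x ⟨ε, hε, hsub, hfin⟩
    refine ⟨ε/2, by linarith, fun y hy => ?_⟩
    have hss : Metric.ball y (ε/2) ⊆ Metric.ball x ε := by
      intro z hz
      have h1 := Metric.mem_ball.mp hz
      have h2 := Metric.mem_ball.mp hy
      exact Metric.mem_ball.mpr (lt_of_le_of_lt (dist_triangle z y x) (by linarith))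
    exact ⟨ε/2, by linarith, hss.trans hsub, ne_top_of_le_ne_top hfin (lintegral_mono_set hss)⟩
  have hsubW : Ω \ M ⊆ W := by
    rintro x ⟨hxΩ, hxM⟩
    rw [hM] at hxM
    have hP : ¬ ∀ ε > 0,
        ∫⁻ t in Ω ∩ Metric.ball x ε, (ENNReal.ofReal (f t))⁻¹ ∂volume = ⊤ :=
      fun hP => hxM ⟨subset_closure hxΩ, hP⟩
    push_neg at hP
    obtain ⟨ε, hε, hne⟩ := hP
    obtain ⟨δ, hδ, hδsub⟩ := Metric.isOpen_iff.mp hΩopen x hxΩ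
    refine ⟨min ε δ, lt_min hε hδ,
      fun z hz => hδsub (Metric.ball_subset_ball (min_le_right _ _) hz), ?_⟩
    refine ne_top_of_le_ne_top hne (lintegral_mono_set ?_)
    intro z hz
    exact ⟨hδsub (Metric.ball_subset_ball (min_le_right _ _) hz),
      Metric.ball_subset_ball (min_le_left _ _) hz⟩
  have hG : ∀ᵐ x ∂(volume : Measure (EuclideanSpace ℝ (Fin d))), x ∈ W → v x = 0 := by
    rw [ae_iff]
    apply measure_null_of_locally_null
    intro x hx
    have hx' : x ∈ W ∧ ¬ v x = 0 := _root_.not_imp.mp hx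
    obtain ⟨ε, hε, hsub, hfin⟩ := hx'.1
    have hkey := key_ball hfmeas hle hvL2 hv x ε hfin
    refine ⟨{y | ¬(y ∈ W → v y = 0)} ∩ Metric.ball x ε,
      inter_mem_nhdsWithin _ (Metric.ball_mem_nhds x hε), ?_⟩
    refine measure_mono_null (fun y hy => ?_) (ae_iff.mp hkey)
    exact fun himp => (_root_.not_imp.mp hy.1).2 (himp hy.2)
  have hWmeas : MeasurableSet W := hWopen.measurableSet
  have hmemW : ∀ᵐ x ∂(volume.restrict (Ω \ M)), x ∈ W := by
    rw [ae_iff]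
    have hle2 : volume.restrict (Ω \ M) ≤ volume.restrict W :=
      Measure.restrict_mono hsubW le_rfl
    refine le_antisymm (le_trans (Measure.le_iff'.mp hle2 _) ?_) zero_le
    rw [show {x | ¬ x ∈ W} = Wᶜ from rfl, Measure.restrict_apply hWmeas.compl]
    simp
  filter_upwards [hmemW, ae_restrict_of_ae hG] with x hxW himp _
  exact himp hxW
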